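/- (Gagliardo–Nirenberg inequality with explicit constant n^{−1/2}) For n > 1 and every u ∈ C_c¹(ℝⁿ) (equivalently, every u ∈ W^{1,1}(ℝⁿ)): ‖u‖_{L^{n/(n−1)}(ℝⁿ)} ≤ n^{−1/2} ‖∇u‖_{L¹(ℝⁿ)}. This follows from the fundamental theorem of calculus applied to each of the n variables separately. -/

import Mathlib

noncomputable section
open MeasureTheory Real Set Metric
open scoped ENNReal NNReal RealInnerProductSpace
open Classical

/-! Common framework: Ω ⊆ ℝⁿ is a bounded (Lipschitz) domain whose boundary splits
into a Dirichlet part Γ_D and a Neumann part Γ.  Sobolev functions are modelled by a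
pair (u, du) where du is the weak gradient of u on Ω; boundary values are taken with
respect to the (n-1)-dimensional Hausdorff (surface) measure. -/

abbrev Euc (n : ℕ) := EuclideanSpace ℝ (Fin n)

/-- Surface measure: the (n-1)-dimensional Hausdorff measure on ℝⁿ. -/
def surf (n : ℕ) : Measure (Euc n) := μH[(n : ℝ) - 1]

/-- Lᵖ norm (real exponent p) of a scalar function w.r.t. a measure. -/
def pN {n : ℕ} (μ : Measure (Euc n)) (p : ℝ) (f : Euc n → ℝ) : ℝ :=
  (∫ x, |f x| ^ p ∂μ) ^ (1 / p)

/-- Lᵖ norm (real exponent p) of a vector field w.r.t. a measure. -/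
def pNV {n : ℕ} (μ : Measure (Euc n)) (p : ℝ) (f : Euc n → Euc n) : ℝ :=
  (∫ x, ‖f x‖ ^ p ∂μ) ^ (1 / p)

/-- `g` is the weak gradient of `u` on `Ω`. -/
def IsWeakGradOn {n : ℕ} (Ω : Set (Euc n)) (u : Euc n → ℝ) (g : Euc n → Euc n) : Prop :=
  ∀ φ : Euc n → ℝ, ContDiff ℝ (⊤ : ℕ∞) φ → HasCompactSupport φ → tsupport φ ⊆ Ω →
    ∫ x in Ω, u x • gradient φ x = - ∫ x in Ω, φ x • g x

/-- Membership in the Sobolev space W^{1,q}(Ω), with weak gradient `du`. -/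
structure MemW1 {n : ℕ} (Ω : Set (Euc n)) (q : ℝ) (u : Euc n → ℝ) (du : Euc n → Euc n) : Prop where
  memu : MemLp u (ENNReal.ofReal q) (volume.restrict Ω)
  memdu : MemLp du (ENNReal.ofReal q) (volume.restrict Ω)
  weak : IsWeakGradOn Ω u du

/-- Membership in the subspace V_q: zero trace on Γ_D when |Γ_D| > 0, and zero mean
over ∂Ω otherwise (Neumann case). -/
def MemV (n : ℕ) (Ω ΓD : Set (Euc n)) (v : Euc n → ℝ) : Prop :=
  if surf n ΓD ≠ 0 then (∀ᵐ x ∂((surf n).restrict ΓD), v x = 0)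
  else (∫ x in frontier Ω, v x ∂(surf n)) = 0

/-- κ = 2 if |Γ_D| > 0 and κ = 4 if |Γ_D| = 0. -/
def kappa (n : ℕ) (ΓD : Set (Euc n)) : ℝ := if surf n ΓD ≠ 0 then 2 else 4

/-- S is a family of Sobolev constants: ‖v‖_{qn/(n−q),Ω} ≤ S q ‖∇v‖_{q,Ω} for v ∈ V_q. -/
def IsSobolevConst (n : ℕ) (Ω ΓD : Set (Euc n)) (S : ℝ → ℝ) : Prop :=
  ∀ q : ℝ, 1 ≤ q → q < n →
    ∀ v : Euc n → ℝ, ∀ dv : Euc n → Euc n, MemW1 Ω q v dv → MemV n Ω ΓD v →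
      pN (volume.restrict Ω) (q * n / ((n : ℝ) - q)) v ≤ S q * pNV (volume.restrict Ω) q dv

/-- K is a family of trace constants: ‖v‖_{q(n−1)/(n−q),∂Ω} ≤ K q ‖∇v‖_{q,Ω} for v ∈ V_q. -/
def IsTraceConst (n : ℕ) (Ω ΓD : Set (Euc n)) (K : ℝ → ℝ) : Prop :=
  ∀ q : ℝ, 1 ≤ q → q < n →
    ∀ v : Euc n → ℝ, ∀ dv : Euc n → Euc n, MemW1 Ω q v dv → MemV n Ω ΓD v →
      pN ((surf n).restrict (frontier Ω)) (q * ((n : ℝ) - 1) / ((n : ℝ) - q)) v ≤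
        K q * pNV (volume.restrict Ω) q dv

/-- The weak formulation of the mixed problem −∇·(a∇u) = f − ∇·F, (a∇u − F)·n = h on Γ,
tested against the pair (v, dv). -/
def WeakForm {n : ℕ} (Ω Γ : Set (Euc n)) (a : Euc n → ℝ) (F : Euc n → Euc n)
    (f h : Euc n → ℝ) (du : Euc n → Euc n) (v : Euc n → ℝ) (dv : Euc n → Euc n) : Prop :=
  ∫ x in Ω, a x * ⟪du x, dv x⟫ =
    (∫ x in Ω, ⟪F x, dv x⟫) + (∫ x in Ω, f x * v x) + ∫ x in Γ, h x * v x ∂(surf n)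

/-- The geometric hypotheses: Ω is a bounded domain in ℝⁿ whose boundary is the union
of the closures of the two disjoint relatively open parts Γ_D and Γ. -/
structure DomainData (n : ℕ) (Ω ΓD Γ : Set (Euc n)) : Prop where
  opn : IsOpen Ω
  conn : IsConnected Ω
  bdd : Bornology.IsBounded Ω
  subD : ΓD ⊆ frontier Ω
  subN : Γ ⊆ frontier Ω
  disj : Disjoint ΓD Γ
  cover : frontier Ω = closure ΓD ∪ closure Γ

/-- The explicit constant C₁(Ω,n,q); `volΩ` stands for the Lebesgue measure |Ω|. -/
def Cone (n : ℕ) (volΩ q : ℝ) : ℝ :=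
  if 2 < n then
    volΩ ^ (1 / q - 1 / 2) *
      (((n : ℝ) - q) ^ ((3 : ℝ) / 2) /
        (q * ((n : ℝ) - 2) * ((n : ℝ) + q - n * q) ^ ((1 : ℝ) / 2))) *
      2 ^ (1 / q + (3 * (n : ℝ) - q * ((n : ℝ) + 1)) / (2 * ((n : ℝ) - q)))
  else
    volΩ ^ (1 / q - 1 / 2) * (2 - q) ^ (-(1 : ℝ) / 2) * 2 ^ (((6 - q) * q - 2) / (2 * q))

/-- The explicit constant C₂(n,q,A); `Sq` is the Sobolev constant S_q and
`volΩ` the Lebesgue measure |Ω|. -/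
def Ctwo (n : ℕ) (volΩ Sq q A : ℝ) : ℝ :=
  if 2 < n then
    A ^ (2 * ((n : ℝ) - q) / (q * ((n : ℝ) - 2))) *
      (((n : ℝ) - q) / ((n : ℝ) + q - n * q)) ^ (((n : ℝ) - q) / (q * ((n : ℝ) - 2))) *
      2 ^ ((2 - q) * ((n : ℝ) * q - n + q) / (q ^ 2 * ((n : ℝ) - 2))) *
      Sq ^ ((n : ℝ) * (2 - q) / (q * ((n : ℝ) - 2)))
  else
    A ^ (2 / (q - 1)) * volΩ ^ (1 / q - 1 / 2) *
      ((q - 1) * (3 - q) ^ ((3 - q) / (q - 1))) ^ ((2 - q) / (2 * q)) /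
      (2 - q) ^ (1 / (q - 1)) *
      2 ^ ((-5 * q ^ 2 + 19 * q - 10) / (2 * q * (q - 1))) * Sq ^ ((3 - q) / (q - 1))

/-- ω_n, the volume of the unit ball of ℝⁿ. -/
def unitBallVol (n : ℕ) : ℝ := π ^ ((n : ℝ) / 2) / Real.Gamma ((n : ℝ) / 2 + 1)

/-- Membership in W^{1,q}(Ω) for an extended-real exponent (q = ∞ allowed). -/
structure MemW1e {n : ℕ} (Ω : Set (Euc n)) (q : ℝ≥0∞) (u : Euc n → ℝ)
    (du : Euc n → Euc n) : Prop where
  memu : MemLp u q (volume.restrict Ω)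
  memdu : MemLp du q (volume.restrict Ω)
  weak : IsWeakGradOn Ω u du

/-- The conjugate exponent q′ = q/(q−1) (with 1′ = ∞), as an extended real. -/
def conjExp (q : ℝ) : ℝ≥0∞ := if q = 1 then ⊤ else ENNReal.ofReal (q / (q - 1))

open Finset Function in
theorem my_loomis_whitney_aux {ι : Type*} [Fintype ι] [DecidableEq ι] {A : ι → Type*}
    [∀ i, MeasurableSpace (A i)] (μ : ∀ i, Measure (A i)) [∀ i, SigmaFinite (μ i)]
    {p : ℝ} (hp₀ : 0 ≤ p) (hp : ((Fintype.card ι : ℝ) - 1) * p = 1)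
    (F : ι → (∀ i, A i) → ℝ≥0∞) (hF : ∀ i, Measurable (F i)) :
    ∀ (s : Finset ι), ∀ (B : Finset ι), Disjoint s B → ∀ x,
      (∫⋯∫⁻_s, (fun x ↦ ∏ j, (∫⋯∫⁻_{j} ∪ B, F j ∂μ) x ^ p) ∂μ) x ≤
        ∏ j, (∫⋯∫⁻_{j} ∪ B ∪ s, F j ∂μ) x ^ p := by
  intro s
  induction s using Finset.induction_on with
  | empty =>
    intro B _ x
    simp [lmarginal_empty]
  | @insert i s hi ih =>
    intro B hdisj x
    have hcard : 1 ≤ Fintype.card ι := Fintype.card_pos_iff.mpr ⟨i⟩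
    have hiB : i ∉ B := Finset.disjoint_left.mp hdisj (Finset.mem_insert_self i s)
    have hdisj' : Disjoint s B := hdisj.mono_left (Finset.subset_insert i s)
    have hmeas : Measurable fun x ↦ ∏ j, (∫⋯∫⁻_{j} ∪ B, F j ∂μ) x ^ p :=
      Finset.measurable_prod _ fun j _ ↦ ((hF j).lmarginal μ).pow_const p
    rw [lmarginal_insert' _ hmeas hi]
    have key : ∀ y, (∫⁻ t, ∏ j, (∫⋯∫⁻_{j} ∪ B, F j ∂μ) (update y i t) ^ p ∂μ i) ≤
        ∏ j, (∫⋯∫⁻_{j} ∪ insert i B, F j ∂μ) y ^ p := by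
      intro y
      have hconst : ∀ t, (∫⋯∫⁻_{i} ∪ B, F i ∂μ) (update y i t) = (∫⋯∫⁻_{i} ∪ B, F i ∂μ) y :=
        fun t ↦ lmarginal_update_of_mem μ (Finset.mem_union_left _ (Finset.mem_singleton_self i)) _ _ _
      have h1 : ∀ j ∈ univ.erase i,
          (∫⁻ t, (∫⋯∫⁻_{j} ∪ B, F j ∂μ) (update y i t) ∂μ i) =
            (∫⋯∫⁻_{j} ∪ insert i B, F j ∂μ) y := by
        intro j hj
        have hij : i ∉ ({j} : Finset ι) ∪ B := by
          simp only [Finset.mem_union, Finset.mem_singleton]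
          rintro (h | h)
          · exact (Finset.ne_of_mem_erase hj) h.symm
          · exact hiB h
        have h2 := lmarginal_insert (μ := μ) (F j) (hF j) hij y
        rw [← h2]
        congr 1
        ext k; simp only [Finset.mem_union, Finset.mem_insert, Finset.mem_singleton]; tauto
      calc ∫⁻ t, ∏ j, (∫⋯∫⁻_{j} ∪ B, F j ∂μ) (update y i t) ^ p ∂μ i
          = ∫⁻ t, (∫⋯∫⁻_{i} ∪ B, F i ∂μ) y ^ p *
              ∏ j ∈ univ.erase i, (∫⋯∫⁻_{j} ∪ B, F j ∂μ) (update y i t) ^ p ∂μ i := by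
            congr 1; ext t
            rw [← Finset.mul_prod_erase univ _ (mem_univ i), hconst t]
        _ = (∫⋯∫⁻_{i} ∪ B, F i ∂μ) y ^ p *
              ∫⁻ t, ∏ j ∈ univ.erase i, (∫⋯∫⁻_{j} ∪ B, F j ∂μ) (update y i t) ^ p ∂μ i := by
            rw [lintegral_const_mul]
            exact Finset.measurable_prod _ fun j _ ↦
              (((hF j).lmarginal μ).comp (measurable_update y)).pow_const p
        _ ≤ (∫⋯∫⁻_{i} ∪ B, F i ∂μ) y ^ p *
              ∏ j ∈ univ.erase i, (∫⁻ t, (∫⋯∫⁻_{j} ∪ B, F j ∂μ) (update y i t) ∂μ i) ^ p := by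
            gcongr
            refine ENNReal.lintegral_prod_norm_pow_le _ (fun j _ ↦
              (((hF j).lmarginal μ).comp (measurable_update y)).aemeasurable) ?_ (fun _ _ ↦ hp₀)
            rw [Finset.sum_const, card_erase_of_mem (mem_univ i), card_univ, nsmul_eq_mul,
              Nat.cast_sub hcard]
            simpa using hp
        _ = (∫⋯∫⁻_{i} ∪ insert i B, F i ∂μ) y ^ p *
              ∏ j ∈ univ.erase i, (∫⋯∫⁻_{j} ∪ insert i B, F j ∂μ) y ^ p := by
            congr 1
            · congr 2
              ext k; simp only [Finset.mem_union, Finset.mem_insert, Finset.mem_singleton]; tauto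
            · exact Finset.prod_congr rfl fun j hj ↦ by rw [h1 j hj]
        _ = ∏ j, (∫⋯∫⁻_{j} ∪ insert i B, F j ∂μ) y ^ p :=
            Finset.mul_prod_erase univ (fun j ↦ (∫⋯∫⁻_{j} ∪ insert i B, F j ∂μ) y ^ p) (mem_univ i)
    calc (∫⋯∫⁻_s, (fun y ↦ ∫⁻ t, (fun x ↦ ∏ j, (∫⋯∫⁻_{j} ∪ B, F j ∂μ) x ^ p) (update y i t) ∂μ i) ∂μ) x
        ≤ (∫⋯∫⁻_s, (fun y ↦ ∏ j, (∫⋯∫⁻_{j} ∪ insert i B, F j ∂μ) y ^ p) ∂μ) x :=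
          lmarginal_mono (fun y ↦ key y) x
      _ ≤ ∏ j, (∫⋯∫⁻_{j} ∪ insert i B ∪ s, F j ∂μ) x ^ p := ih (insert i B)
          (Finset.disjoint_insert_right.mpr ⟨hi, hdisj'⟩) x
      _ = ∏ j, (∫⋯∫⁻_{j} ∪ B ∪ insert i s, F j ∂μ) x ^ p := by
          refine Finset.prod_congr rfl fun j _ ↦ ?_
          congr 2
          ext k; simp only [Finset.mem_union, Finset.mem_insert, Finset.mem_singleton]; tauto

open Finset Function in
theorem my_pi_bound {n : ℕ} (hn : 1 < n) (v : (Fin n → ℝ) → ℝ) (hv : ContDiff ℝ 1 v)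
    (h2v : HasCompactSupport v) :
    ∫⁻ y, (‖v y‖₊ : ℝ≥0∞) ^ ((n : ℝ) / ((n : ℝ) - 1)) ≤
      ∏ j : Fin n, (∫⁻ y, (‖fderiv ℝ v y (Pi.single j 1)‖₊ : ℝ≥0∞)) ^ (((n : ℝ) - 1)⁻¹) := by
  have hn1 : (0 : ℝ) < (n : ℝ) - 1 := by
    have : (1 : ℝ) < n := by exact_mod_cast hn
    linarith
  set p : ℝ := ((n : ℝ) - 1)⁻¹ with hpdef
  have h0 : (0 : ℝ) ≤ p := by positivity
  have hcard : ((Fintype.card (Fin n) : ℝ) - 1) * p = 1 := by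
    rw [Fintype.card_fin, hpdef]
    exact mul_inv_cancel₀ hn1.ne'
  set F : Fin n → (Fin n → ℝ) → ℝ≥0∞ := fun j y ↦ (‖fderiv ℝ v y (Pi.single j 1)‖₊ : ℝ≥0∞) with hFdef
  have hFc : ∀ j, Continuous (F j) := by
    intro j
    have hc : Continuous (fun y ↦ fderiv ℝ v y) := hv.continuous_fderiv one_ne_zero
    exact (ENNReal.continuous_coe.comp ((hc.clm_apply continuous_const).nnnorm))
  have hF : ∀ j, Measurable (F j) := fun j ↦ (hFc j).measurable
  have ftc : ∀ (y : Fin n → ℝ) (j : Fin n), (‖v y‖₊ : ℝ≥0∞) ≤ ∫⁻ t, F j (Function.update y j t) := by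
    intro y j
    have h1 : ContDiff ℝ 1 (v ∘ Function.update y j) := hv.comp (by convert contDiff_update 1 y j)
    have h2 : HasCompactSupport (v ∘ Function.update y j) :=
      h2v.comp_isClosedEmbedding (isClosedEmbedding_update y j)
    calc (‖v y‖₊ : ℝ≥0∞)
        ≤ ∫⁻ t in Set.Iic (y j), ‖deriv (v ∘ Function.update y j) t‖₊ := by
          refine le_trans ?_ (h2.enorm_le_lintegral_Ici_deriv h1 (y j))
          simp
      _ ≤ ∫⁻ t, ‖deriv (v ∘ Function.update y j) t‖₊ :=
          lintegral_mono' Measure.restrict_le_self le_rfl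
      _ = ∫⁻ t, F j (Function.update y j t) := by
          congr 1 with t
          congr 2
          rw [fderiv_comp_deriv _ ((hv.differentiable one_ne_zero) _)
            (hasDerivAt_update y j t).differentiableAt, deriv_update]
  have LW := my_loomis_whitney_aux (fun _ : Fin n ↦ (volume : Measure ℝ)) h0 hcard F hF
    Finset.univ ∅ (by simp) 0
  have huniv : ∀ j : Fin n, ({j} : Finset (Fin n)) ∪ Finset.univ = Finset.univ := fun j ↦ by simp
  simp only [Finset.union_empty, huniv, lmarginal_univ, lmarginal_singleton] at LW
  rw [← volume_pi] at LW
  calc ∫⁻ y, (‖v y‖₊ : ℝ≥0∞) ^ ((n : ℝ) / ((n : ℝ) - 1))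
      = ∫⁻ y, ∏ _j : Fin n, (‖v y‖₊ : ℝ≥0∞) ^ p := by
        congr 1 with y
        rw [Finset.prod_const, Finset.card_univ, Fintype.card_fin,
          ← ENNReal.rpow_natCast ((‖v y‖₊ : ℝ≥0∞) ^ p) n, ← ENNReal.rpow_mul]
        congr 1
        rw [hpdef]
        field_simp
    _ ≤ ∫⁻ y, ∏ j : Fin n, (∫⁻ t, F j (Function.update y j t)) ^ p := by
        refine lintegral_mono fun y ↦ ?_
        refine Finset.prod_le_prod' fun j _ ↦ ?_
        exact ENNReal.rpow_le_rpow (ftc y j) h0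
    _ ≤ ∏ j : Fin n, (∫⁻ y, F j y) ^ p := LW

/-- The Gagliardo–Nirenberg inequality with the explicit constant n^{−1/2}:
‖u‖_{L^{n/(n−1)}(ℝⁿ)} ≤ n^{−1/2}‖∇u‖_{L¹(ℝⁿ)} for u ∈ C_c¹(ℝⁿ). -/
theorem gagliardo_nirenberg_explicit
    {n : ℕ} (hn : 1 < n) (u : Euc n → ℝ)
    (hu : ContDiff ℝ 1 u) (hsupp : HasCompactSupport u) :
    (∫ x : Euc n, |u x| ^ ((n : ℝ) / ((n : ℝ) - 1))) ^ (((n : ℝ) - 1) / n) ≤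
      (n : ℝ) ^ (-(1 : ℝ) / 2) * ∫ x : Euc n, ‖gradient u x‖ := by
  have hn0 : (0 : ℝ) < n := by positivity
  have hn1 : (0 : ℝ) < (n : ℝ) - 1 := by
    have : (1 : ℝ) < n := by exact_mod_cast hn
    linarith
  set q : ℝ := (n : ℝ) / ((n : ℝ) - 1) with hqdef
  set p : ℝ := ((n : ℝ) - 1)⁻¹ with hpdef
  have hq0 : 0 < q := by positivity
  -- the equivalences
  set E := EuclideanSpace.equiv (Fin n) ℝ with hEdef
  set me := (MeasurableEquiv.toLp 2 (Fin n → ℝ)).symm with hmedef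
  set v : (Fin n → ℝ) → ℝ := u ∘ E.symm with hvdef
  have hv : ContDiff ℝ 1 v := hu.comp E.symm.contDiff
  have h2v : HasCompactSupport v := hsupp.comp_homeomorph E.symm.toHomeomorph
  have hMP := EuclideanSpace.volume_preserving_symm_measurableEquiv_toLp (Fin n)
  have hme : ∀ x : Euc n, E.symm (me x) = x := fun x ↦ rfl
  -- the gradient
  set g : Euc n → Euc n := fun x ↦ gradient u x with hgdef
  have hgrad : ∀ (x : Euc n) (w : Euc n), fderiv ℝ u x w = ⟪g x, w⟫ :=
    fun x w ↦ (InnerProductSpace.toDual_symm_apply).symm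
  have hgc : Continuous g :=
    (LinearIsometryEquiv.continuous _).comp (hu.continuous_fderiv one_ne_zero)
  have hgsupp : HasCompactSupport g := (hsupp.fderiv ℝ).comp_left (map_zero _)
  have hgj : ∀ (j : Fin n), Continuous fun x : Euc n ↦ g x j :=
    fun j ↦ (continuous_apply j).comp ((PiLp.continuous_ofLp 2 _).comp hgc)
  have hgjsupp : ∀ j : Fin n, HasCompactSupport fun x : Euc n ↦ g x j :=
    fun j ↦ hgsupp.comp_left (g := fun w : Euc n ↦ w j) rfl
  have hgjint : ∀ j : Fin n, Integrable fun x : Euc n ↦ |g x j| :=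
    fun j ↦ ((hgj j).abs).integrable_of_hasCompactSupport ((hgjsupp j).abs)
  have hgnint : Integrable fun x : Euc n ↦ ‖g x‖ :=
    (hgc.norm).integrable_of_hasCompactSupport hgsupp.norm
  -- fderiv of v at Pi.single
  have hfd : ∀ (y : Fin n → ℝ) (j : Fin n),
      fderiv ℝ v y (Pi.single j 1) = fderiv ℝ u (E.symm y) (EuclideanSpace.single j (1 : ℝ)) := by
    intro y j
    rw [hvdef, E.symm.comp_right_fderiv]
    rfl
  -- key inequality in ℝ≥0∞
  have key := my_pi_bound hn v hv h2v
  -- transfer the LHS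
  have hL : (∫⁻ y, (‖v y‖₊ : ℝ≥0∞) ^ q) = ∫⁻ x : Euc n, (‖u x‖₊ : ℝ≥0∞) ^ q := by
    rw [← hMP.lintegral_comp (f := fun y ↦ (‖v y‖₊ : ℝ≥0∞) ^ q)
      ((hv.continuous.measurable.nnnorm.coe_nnreal_ennreal).pow_const q)]
    rfl
  -- transfer the RHS factors
  have hA : ∀ j : Fin n, (∫⁻ y, (‖fderiv ℝ v y (Pi.single j 1)‖₊ : ℝ≥0∞)) =
      ∫⁻ x : Euc n, (‖g x j‖₊ : ℝ≥0∞) := by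
    intro j
    rw [← hMP.lintegral_comp (f := fun y ↦ (‖fderiv ℝ v y (Pi.single j 1)‖₊ : ℝ≥0∞))
      (((hv.continuous_fderiv one_ne_zero).clm_apply continuous_const).measurable.nnnorm.coe_nnreal_ennreal)]
    congr 1 with x
    rw [hfd (me x) j, hme x, hgrad, EuclideanSpace.inner_single_right]
    simp
  rw [hL] at key
  simp_rw [hA] at key
  -- real-valued quantities
  set r : Fin n → ℝ := fun j ↦ ∫ x : Euc n, |g x j| with hrdef
  have hr0 : ∀ j, 0 ≤ r j := fun j ↦ integral_nonneg fun x ↦ abs_nonneg _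
  have hAr : ∀ j : Fin n, (∫⁻ x : Euc n, (‖g x j‖₊ : ℝ≥0∞)) = ENNReal.ofReal (r j) := by
    intro j
    rw [hrdef]
    simp only [← enorm_eq_nnnorm]
    rw [← ofReal_integral_norm_eq_lintegral_enorm ((hgj _).integrable_of_hasCompactSupport (hgjsupp _))]
    simp [Real.norm_eq_abs]
  simp_rw [hAr] at key
  -- LHS as toReal
  have hInt : (∫ x : Euc n, |u x| ^ q) = (∫⁻ x : Euc n, (‖u x‖₊ : ℝ≥0∞) ^ q).toReal := by
    rw [integral_eq_lintegral_of_nonneg_ae (Filter.Eventually.of_forall fun x ↦ by positivity)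
      ((hu.continuous.abs.rpow_const (fun x ↦ Or.inr hq0.le)).aestronglyMeasurable)]
    congr 1
    refine lintegral_congr fun x ↦ ?_
    rw [← ENNReal.ofReal_rpow_of_nonneg (abs_nonneg _) hq0.le, ← Real.enorm_eq_ofReal_abs, enorm_eq_nnnorm]
  -- pass to reals
  have hfin : (∏ j : Fin n, (ENNReal.ofReal (r j)) ^ p) ≠ ⊤ :=
    ENNReal.prod_ne_top fun j _ ↦ ENNReal.rpow_ne_top_of_nonneg (by positivity) ENNReal.ofReal_ne_top
  have hreal : (∫ x : Euc n, |u x| ^ q) ≤ ∏ j : Fin n, (r j) ^ p := by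
    rw [hInt]
    calc (∫⁻ x : Euc n, (‖u x‖₊ : ℝ≥0∞) ^ q).toReal
        ≤ (∏ j : Fin n, (ENNReal.ofReal (r j)) ^ p).toReal := ENNReal.toReal_mono hfin key
      _ = ∏ j : Fin n, (r j) ^ p := by
          rw [ENNReal.toReal_prod]
          refine Finset.prod_congr rfl fun j _ ↦ ?_
          rw [← ENNReal.toReal_rpow, ENNReal.toReal_ofReal (hr0 j)]
  -- Cauchy–Schwarz pointwise
  have hCS : ∀ x : Euc n, (∑ j : Fin n, |g x j|) ≤ Real.sqrt n * ‖g x‖ := by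
    intro x
    have h1 : (∑ j : Fin n, |g x j|) ^ 2 ≤ (n : ℝ) * ∑ j : Fin n, |g x j| ^ 2 := by
      simpa using sq_sum_le_card_mul_sum_sq (s := Finset.univ) (f := fun j ↦ |g x j|)
    have h2 : ‖g x‖ = Real.sqrt (∑ j : Fin n, |g x j| ^ 2) := by
      rw [EuclideanSpace.norm_eq]
      simp [Real.norm_eq_abs]
    calc (∑ j : Fin n, |g x j|) = Real.sqrt ((∑ j : Fin n, |g x j|) ^ 2) :=
          (Real.sqrt_sq (by positivity)).symm
      _ ≤ Real.sqrt ((n : ℝ) * ∑ j : Fin n, |g x j| ^ 2) := Real.sqrt_le_sqrt h1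
      _ = Real.sqrt n * ‖g x‖ := by rw [Real.sqrt_mul (by positivity), h2]
  -- sum of the r j
  have hsum : (∑ j : Fin n, r j) ≤ Real.sqrt n * ∫ x : Euc n, ‖g x‖ := by
    calc (∑ j : Fin n, r j) = ∫ x : Euc n, ∑ j : Fin n, |g x j| :=
          (integral_finset_sum Finset.univ fun j _ ↦ hgjint j).symm
      _ ≤ ∫ x : Euc n, Real.sqrt n * ‖g x‖ := by
          refine integral_mono (integrable_finset_sum Finset.univ fun j _ ↦ hgjint j)
            (hgnint.const_mul _) hCS
      _ = Real.sqrt n * ∫ x : Euc n, ‖g x‖ := integral_const_mul _ _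
  -- AM-GM
  have hAMGM : (∏ j : Fin n, (r j) ^ ((n : ℝ)⁻¹)) ≤ ∑ j : Fin n, (n : ℝ)⁻¹ * r j := by
    refine Real.geom_mean_le_arith_mean_weighted Finset.univ _ _ (fun j _ ↦ by positivity) ?_
      (fun j _ ↦ hr0 j)
    rw [Finset.sum_const, Finset.card_univ, Fintype.card_fin, nsmul_eq_mul]
    field_simp
  -- finish
  have hIpos : 0 ≤ ∫ x : Euc n, ‖g x‖ := integral_nonneg fun x ↦ norm_nonneg _
  calc (∫ x : Euc n, |u x| ^ q) ^ (((n : ℝ) - 1) / n)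
      ≤ (∏ j : Fin n, (r j) ^ p) ^ (((n : ℝ) - 1) / n) := by
        refine Real.rpow_le_rpow ?_ hreal (by positivity)
        exact integral_nonneg fun x ↦ by positivity
    _ = ∏ j : Fin n, (r j) ^ ((n : ℝ)⁻¹) := by
        rw [← Real.finset_prod_rpow _ _ (fun j _ ↦ by positivity)]
        refine Finset.prod_congr rfl fun j _ ↦ ?_
        rw [← Real.rpow_mul (hr0 j)]
        congr 1
        rw [hpdef]
        field_simp
    _ ≤ ∑ j : Fin n, (n : ℝ)⁻¹ * r j := hAMGM
    _ = (n : ℝ)⁻¹ * ∑ j : Fin n, r j := by rw [Finset.mul_sum]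
    _ ≤ (n : ℝ)⁻¹ * (Real.sqrt n * ∫ x : Euc n, ‖g x‖) := by
        exact mul_le_mul_of_nonneg_left hsum (by positivity)
    _ = (n : ℝ) ^ (-(1 : ℝ) / 2) * ∫ x : Euc n, ‖gradient u x‖ := by
        rw [← mul_assoc]
        congr 1
        have hs : Real.sqrt n * Real.sqrt n = (n : ℝ) := Real.mul_self_sqrt hn0.le
        have hspos : (0 : ℝ) < Real.sqrt n := Real.sqrt_pos.mpr hn0
        rw [neg_div, Real.rpow_neg hn0.le, ← Real.sqrt_eq_rpow]
        field_simp
        rw [sq, hs]
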